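/- arXiv:1809.06848 — 3 statements merged into one kernel-verified Lean document; each statement's English description precedes it below -/
import Mathlib

section
/- Under the gradient starvation dynamics (α'(t) = λ·z/(1+exp(z(α+β))) + (1−λ)·z/(1+exp(zα)), β'(t) = λ·z/(1+exp(z(α+β))), z(t) > 0, α(0) ≥ β(0)/λ > 0), let δ ∈ (0, 1/2) and suppose t* > 0 satisfies z(t*)·α(t*) = log((1−δ)/δ). Then the sigmoid of z(t*)·β(t*) satisfies 1/(1 + exp(−z(t*)β(t*))) ≤ 1/(1 + exp(−λ·log((1−δ)/δ))). -/
/-!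
Along the flow `β` is nondecreasing, so it stays positive. The gap `λα − β` then has derivative
`λ(1 − λ) z (σ(−zα) − σ(−z(α + β))) ≥ 0`, since the logistic weight `1 / (1 + exp ·)` is
antitone and `β ≥ 0`. Hence `λα − β ≥ λα(0) − β(0) ≥ 0` for all times, and at `t*` this gives
`zβ ≤ λ zα = λ log((1 − δ)/δ)`; monotonicity of the sigmoid finishes the proof.
-/

open Real Set

theorem monotoneOn_Ici_of_hasDerivAt_nonneg {f f' : ℝ → ℝ} {a : ℝ}
    (hf : ∀ t ≥ a, HasDerivAt f (f' t) t) (hf' : ∀ t > a, 0 ≤ f' t) :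
    MonotoneOn f (Ici a) :=
  monotoneOn_of_hasDerivWithinAt_nonneg (convex_Ici a)
    (fun t ht => (hf t ht).continuousAt.continuousWithinAt)
    (fun t ht => by rw [interior_Ici] at ht; exact (hf t ht.le).hasDerivWithinAt)
    (fun t ht => by rw [interior_Ici] at ht; exact hf' t ht)

theorem gradientStarvation_gap_deriv_nonneg {lam z a b : ℝ} (hlam0 : 0 ≤ lam) (hlam1 : lam ≤ 1)
    (hz : 0 ≤ z) (hb : 0 ≤ b) :
    0 ≤ lam * (lam * z / (1 + exp (z * (a + b))) + (1 - lam) * z / (1 + exp (z * a)))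
      - lam * z / (1 + exp (z * (a + b))) := by
  have hweight : 1 / (1 + exp (z * (a + b))) ≤ 1 / (1 + exp (z * a)) := by
    gcongr
    linarith
  calc (0 : ℝ) ≤ lam * (1 - lam) * z * (1 / (1 + exp (z * a)) - 1 / (1 + exp (z * (a + b)))) :=
        mul_nonneg (mul_nonneg (mul_nonneg hlam0 (sub_nonneg.2 hlam1)) hz) (sub_nonneg.2 hweight)
    _ = _ := by ring

theorem stmt_10_general (lam : ℝ) (hlam : lam ∈ Set.Ioc (0:ℝ) 1)
    (z α β : ℝ → ℝ)
    (hα : ∀ t ≥ (0:ℝ), HasDerivAt α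
      (lam * z t / (1 + Real.exp (z t * (α t + β t)))
        + (1 - lam) * z t / (1 + Real.exp (z t * α t))) t)
    (hβ : ∀ t ≥ (0:ℝ), HasDerivAt β
      (lam * z t / (1 + Real.exp (z t * (α t + β t)))) t)
    (hzpos : ∀ t ≥ (0:ℝ), 0 < z t)
    (hβ0 : 0 < β 0 / lam) (hαβ0 : α 0 ≥ β 0 / lam)
    (δ : ℝ)
    (tstar : ℝ) (htpos : 0 < tstar)
    (hstop : z tstar * α tstar = Real.log ((1 - δ) / δ)) :
    1 / (1 + Real.exp (-(z tstar * β tstar)))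
      ≤ 1 / (1 + Real.exp (-(lam * Real.log ((1 - δ) / δ)))) := by
  obtain ⟨hlam0, hlam1⟩ := hlam
  have hβ_mono : MonotoneOn β (Ici 0) :=
    monotoneOn_Ici_of_hasDerivAt_nonneg hβ fun t ht => by have := hzpos t ht.le; positivity
  have hβ_nonneg : ∀ t ≥ 0, 0 ≤ β t := fun t ht =>
    ((div_pos_iff_of_pos_right hlam0).1 hβ0).le.trans (hβ_mono self_mem_Ici ht ht)
  have hgap_mono : MonotoneOn (fun t => lam * α t - β t) (Ici 0) :=
    monotoneOn_Ici_of_hasDerivAt_nonneg (fun t ht => ((hα t ht).const_mul lam).sub (hβ t ht))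
      fun t ht => gradientStarvation_gap_deriv_nonneg hlam0.le hlam1 (hzpos t ht.le).le
        (hβ_nonneg t ht.le)
  have hgap_init : β 0 ≤ lam * α 0 := (div_le_iff₀' hlam0).1 hαβ0
  have hgap : β tstar ≤ lam * α tstar := by
    have := hgap_mono self_mem_Ici (mem_Ici.2 htpos.le) htpos.le
    dsimp only at this
    linarith
  have hlogit : z tstar * β tstar ≤ lam * log ((1 - δ) / δ) :=
    calc z tstar * β tstar ≤ z tstar * (lam * α tstar) :=
          mul_le_mul_of_nonneg_left hgap (hzpos tstar htpos.le).le
      _ = lam * log ((1 - δ) / δ) := by rw [← hstop]; ring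
  simpa only [one_div, ← sigmoid_def] using sigmoid_le hlogit

/-- Gradient starvation theorem: when training stops at confidence `1 − δ` on the
frequent feature, the confidence on the rare feature is bounded by
`σ(λ·log((1−δ)/δ))`. -/
theorem stmt_10 (lam : ℝ) (hlam : lam ∈ Set.Ioc (0:ℝ) 1)
    (z α β : ℝ → ℝ)
    (hα : ∀ t ≥ (0:ℝ), HasDerivAt α
      (lam * z t / (1 + Real.exp (z t * (α t + β t)))
        + (1 - lam) * z t / (1 + Real.exp (z t * α t))) t)
    (hβ : ∀ t ≥ (0:ℝ), HasDerivAt β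
      (lam * z t / (1 + Real.exp (z t * (α t + β t)))) t)
    (hzpos : ∀ t ≥ (0:ℝ), 0 < z t)
    (hβ0 : 0 < β 0 / lam) (hαβ0 : α 0 ≥ β 0 / lam)
    (δ : ℝ) (hδ : δ ∈ Set.Ioo (0:ℝ) (1/2))
    (tstar : ℝ) (htpos : 0 < tstar)
    (hstop : z tstar * α tstar = Real.log ((1 - δ) / δ)) :
    1 / (1 + Real.exp (-(z tstar * β tstar)))
      ≤ 1 / (1 + Real.exp (-(lam * Real.log ((1 - δ) / δ)))) :=
  stmt_10_general lam hlam z α β hα hβ hzpos hβ0 hαβ0 δ tstar htpos hstop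
end

section
/- Let a > 0, u₀ > 0, and let u solve u'(t) = 2a·u(t)/(1 + exp(u(t))), u(0) = u₀. Then for any u_f ≥ u₀, the time t with u(t) = u_f satisfies t ≥ (1/a)·(exp(u_f/2) − exp(u₀/2)), hence the time to reach confidence σ(u_f) = 1 − δ grows at least like (1/a)·√((1−δ)/δ) as δ → 0. -/
/-!
Along the flow `u' = 2a u / (1 + e^u)` the quantity `a t - e^{u(t)/2}` never decreases: its
derivative is `a (1 - u e^{u/2} / (1 + e^u))`, and `u e^{u/2} ≤ e^u ≤ 1 + e^u` because
`u ≤ e^{u/2}`. Comparing its values at `0` and `t` gives `a t ≥ e^{u(t)/2} - e^{u₀/2}`, and at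
the logit `u(t) = log((1-δ)/δ)` one has `e^{u(t)/2} = √((1-δ)/δ)`.
-/

open Real Set

lemma le_exp_half (y : ℝ) : y ≤ exp (y / 2) := by
  rcases le_or_gt y (-4) with hy | hy
  · linarith [exp_pos (y / 2)]
  · -- `e^{y/2} = (e^{y/4})² ≥ (1 + y/4)² = y + (1 - y/4)²`
    have hsq : exp (y / 2) = exp (y / 4) ^ 2 := by rw [← exp_nat_mul]; ring_nf
    have hlin := add_one_le_exp (y / 4)
    nlinarith [sq_nonneg (1 - y / 4)]

lemma mul_exp_half_le_one_add_exp (y : ℝ) : y * exp (y / 2) ≤ 1 + exp y :=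
  calc y * exp (y / 2) ≤ exp (y / 2) * exp (y / 2) :=
        mul_le_mul_of_nonneg_right (le_exp_half y) (exp_pos _).le
    _ = exp y := by rw [← exp_add, add_halves]
    _ ≤ 1 + exp y := by linarith

section LogitFlow

variable {a : ℝ} {u : ℝ → ℝ}

lemma monotoneOn_mul_sub_exp_half (ha : 0 ≤ a)
    (hode : ∀ t ≥ (0 : ℝ), HasDerivAt u (2 * a * u t / (1 + exp (u t))) t) :
    MonotoneOn (fun s => a * s - exp (u s / 2)) (Ici 0) := by
  have hderiv : ∀ t ∈ Ici (0 : ℝ), HasDerivAt (fun s => a * s - exp (u s / 2))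
      (a - exp (u t / 2) * (2 * a * u t / (1 + exp (u t)) / 2)) t := fun t ht =>
    (((hasDerivAt_id t).const_mul a).sub ((hode t ht).div_const 2).exp).congr_deriv (by ring)
  refine monotoneOn_of_hasDerivWithinAt_nonneg (convex_Ici 0)
    (fun t ht => (hderiv t ht).continuousAt.continuousWithinAt)
    (fun t ht => (hderiv t (interior_subset ht)).hasDerivWithinAt) fun t _ => ?_
  have hden : 0 < 1 + exp (u t) := by positivity
  have hkey : exp (u t / 2) * (2 * a * u t / (1 + exp (u t)) / 2)
      = a * (u t * exp (u t / 2)) / (1 + exp (u t)) := by ring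
  rw [sub_nonneg, hkey, div_le_iff₀ hden]
  exact mul_le_mul_of_nonneg_left (mul_exp_half_le_one_add_exp (u t)) ha

lemma exp_half_sub_le_mul_of_logit_flow (ha : 0 ≤ a)
    (hode : ∀ t ≥ (0 : ℝ), HasDerivAt u (2 * a * u t / (1 + exp (u t))) t)
    {t : ℝ} (ht : 0 ≤ t) : exp (u t / 2) - exp (u 0 / 2) ≤ a * t := by
  have h := monotoneOn_mul_sub_exp_half ha hode (le_refl (0 : ℝ)) ht ht
  simp only [mul_zero, zero_sub] at h
  linarith

end LogitFlow

lemma exp_log_div_two {x : ℝ} (hx : 0 < x) : exp (log x / 2) = √x := by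
  rw [exp_half, exp_log hx]

theorem stmt_16_general (a : ℝ) (ha : 0 < a) (u : ℝ → ℝ) (u₀ : ℝ) (hu0 : u 0 = u₀)
    (hode : ∀ t ≥ (0:ℝ), HasDerivAt u (2 * a * u t / (1 + Real.exp (u t))) t) :
    (∀ uf ≥ u₀, ∀ t ≥ (0:ℝ), u t = uf →
        t ≥ 1 / a * (Real.exp (uf / 2) - Real.exp (u₀ / 2))) ∧
      ∀ δ ∈ Set.Ioo (0:ℝ) 1, Real.log ((1 - δ) / δ) ≥ u₀ →
        ∀ t ≥ (0:ℝ), u t = Real.log ((1 - δ) / δ) →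
          t ≥ 1 / a * (Real.sqrt ((1 - δ) / δ) - Real.exp (u₀ / 2)) := by
  have htime : ∀ uf, ∀ t ≥ (0:ℝ), u t = uf →
      t ≥ 1 / a * (exp (uf / 2) - exp (u₀ / 2)) := by
    intro uf t ht hut
    have h := exp_half_sub_le_mul_of_logit_flow ha.le hode ht
    rw [hut, hu0] at h
    rw [ge_iff_le, one_div, inv_mul_eq_div, div_le_iff₀ ha]
    linarith
  refine ⟨fun uf _ => htime uf, fun δ hδ _ t ht hut => ?_⟩
  have hodds : 0 < (1 - δ) / δ := div_pos (sub_pos.mpr hδ.2) hδ.1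
  simpa only [exp_log_div_two hodds] using htime _ t ht hut

/-- Lower bound on the training time under cross-entropy: reaching logit `u_f`
takes at least `(1/a)(e^{u_f/2} − e^{u₀/2})`, hence reaching confidence `1 − δ`
takes at least `(1/a)(√((1−δ)/δ) − e^{u₀/2})`. -/
theorem stmt_16 (a : ℝ) (ha : 0 < a) (u : ℝ → ℝ) (u₀ : ℝ) (hu0 : u 0 = u₀) (hpos : 0 < u₀)
    (hode : ∀ t ≥ (0:ℝ), HasDerivAt u (2 * a * u t / (1 + Real.exp (u t))) t) :
    (∀ uf ≥ u₀, ∀ t ≥ (0:ℝ), u t = uf →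
        t ≥ 1 / a * (Real.exp (uf / 2) - Real.exp (u₀ / 2))) ∧
      ∀ δ ∈ Set.Ioo (0:ℝ) 1, Real.log ((1 - δ) / δ) ≥ u₀ →
        ∀ t ≥ (0:ℝ), u t = Real.log ((1 - δ) / δ) →
          t ≥ 1 / a * (Real.sqrt ((1 - δ) / δ) - Real.exp (u₀ / 2)) :=
  stmt_16_general a ha u u₀ hu0 hode
end

section
/- Let a > 0 and suppose u₁, u₂ : ℝ → ℝ both satisfy u'(t) = 2a·u(t)/(1 + exp(u(t))) with 0 < u₁(0) ≤ u₂(0). Then u₁(t) ≤ u₂(t) for all t ≥ 0, and for any target value u_f ≥ u₂(0), the times t₁, t₂ at which u₁, u₂ reach u_f satisfy t₁ − t₂ = (1/(2a))·(log(u₂(0)/u₁(0)) + Ei(u₂(0)) − Ei(u₁(0))). -/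
/-!
Separating variables in `u' = 2a u / (1 + eᵘ)` gives `(1 + eᵘ) / u du = 2a dt`, and
`log x + Ei x` is an antiderivative of `(1 + eˣ) / x`. So along a positive solution
`log u(t) + Ei(u(t)) = log u(0) + Ei(u(0)) + 2at`: all positive solutions follow the same
strictly increasing curve, only started at different times. The comparison and the time shift
are read off from this conservation law.
-/

/-- The exponential integral `Ei(x)` for `x > 0` (principal value), via the
standard identity `Ei(x) = γ + log x + ∫₀ˣ (e^t − 1)/t dt`. -/
noncomputable def expInt (x : ℝ) : ℝ :=
  Real.eulerMascheroniConstant + Real.log x + ∫ t in (0:ℝ)..x, (Real.exp t - 1) / t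

open Real Set

/-- `dslope exp 0` is the continuous extension of `(eᵗ - 1) / t` across `t = 0`, so the
fundamental theorem of calculus applies to its integral. -/
lemma expInt_eq_integral_dslope (x : ℝ) :
    expInt x = eulerMascheroniConstant + log x + ∫ t in (0:ℝ)..x, dslope exp 0 t := by
  rw [expInt]
  congr 1
  refine intervalIntegral.integral_congr_ae ?_
  filter_upwards [MeasureTheory.Measure.ae_ne MeasureTheory.volume 0] with t ht _
  rw [dslope_of_ne _ ht, slope_def_field, exp_zero, sub_zero]

lemma continuous_dslope_exp : Continuous (dslope exp 0) :=
  continuous_iff_continuousAt.2 fun t => by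
    rcases eq_or_ne t 0 with rfl | ht
    · exact continuousAt_dslope_same.2 differentiableAt_exp
    · exact (continuousAt_dslope_of_ne ht).2 continuous_exp.continuousAt

lemma hasDerivAt_expInt {x : ℝ} (hx : x ≠ 0) : HasDerivAt expInt (exp x / x) x := by
  have h := ((hasDerivAt_log hx).const_add eulerMascheroniConstant).add
    (continuous_dslope_exp.integral_hasStrictDerivAt 0 x).hasDerivAt
  rw [dslope_of_ne _ hx, slope_def_field, exp_zero, sub_zero] at h
  rw [funext expInt_eq_integral_dslope]
  exact h.congr_deriv (by field_simp; ring)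

noncomputable def logAddExpInt (x : ℝ) : ℝ := log x + expInt x

lemma hasDerivAt_logAddExpInt {x : ℝ} (hx : x ≠ 0) :
    HasDerivAt logAddExpInt ((1 + exp x) / x) x := by
  exact ((hasDerivAt_log hx).add (hasDerivAt_expInt hx)).congr_deriv (by field_simp)

lemma strictMonoOn_logAddExpInt : StrictMonoOn logAddExpInt (Ioi 0) := by
  refine strictMonoOn_of_hasDerivWithinAt_pos (convex_Ioi 0)
    (fun x hx => (hasDerivAt_logAddExpInt (ne_of_gt hx)).continuousAt.continuousWithinAt)
    (fun x hx => (hasDerivAt_logAddExpInt (ne_of_gt (interior_subset hx))).hasDerivWithinAt)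
    fun x hx => ?_
  rw [interior_Ioi] at hx
  exact div_pos (by positivity) hx

lemma apply_zero_le_of_deriv_pos_at_level {u u' : ℝ → ℝ} (hu : ∀ t ≥ 0, HasDerivAt u (u' t) t)
    (hpos : ∀ t ≥ 0, u t = u 0 → 0 < u' t) {t : ℝ} (ht : 0 ≤ t) : u 0 ≤ u t := by
  have h := image_le_of_deriv_right_lt_deriv_boundary (a := 0) (b := t)
    (f := fun s => -u s) (f' := fun s => -u' s) (B := fun _ => -u 0) (B' := fun _ => 0)
    (fun s hs => (hu s hs.1).neg.continuousAt.continuousWithinAt)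
    (fun s hs => (hu s hs.1).neg.hasDerivWithinAt) le_rfl (fun _ => hasDerivAt_const _ _)
    (fun s hs hs0 => neg_neg_of_pos (hpos s hs.1 (neg_inj.1 hs0))) ⟨ht, le_rfl⟩
  exact neg_le_neg_iff.1 h

def IsLogitSolution (a : ℝ) (u : ℝ → ℝ) : Prop :=
  ∀ t ≥ (0:ℝ), HasDerivAt u (2 * a * u t / (1 + exp (u t))) t

namespace IsLogitSolution

variable {a : ℝ} {u : ℝ → ℝ}

lemma apply_zero_le (hu : IsLogitSolution a u) (ha : 0 < a) (h0 : 0 < u 0) {t : ℝ}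
    (ht : 0 ≤ t) : u 0 ≤ u t :=
  apply_zero_le_of_deriv_pos_at_level hu
    (fun s _ hs => div_pos (by rw [hs]; positivity) (by positivity)) ht

lemma logAddExpInt_apply (hu : IsLogitSolution a u) (ha : 0 < a) (h0 : 0 < u 0) {t : ℝ}
    (ht : 0 ≤ t) : logAddExpInt (u t) = logAddExpInt (u 0) + 2 * a * t := by
  have hderiv : ∀ s ≥ (0:ℝ), HasDerivAt (fun s => logAddExpInt (u s) - 2 * a * s) 0 s := by
    intro s hs
    have hus : 0 < u s := h0.trans_le (hu.apply_zero_le ha h0 hs)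
    exact (((hasDerivAt_logAddExpInt hus.ne').comp s (hu s hs)).sub
      ((hasDerivAt_id s).const_mul (2 * a))).congr_deriv (by field_simp; ring)
  have h := constant_of_has_deriv_right_zero (a := 0) (b := t)
    (fun s hs => (hderiv s hs.1).continuousAt.continuousWithinAt)
    (fun s hs => (hderiv s hs.1).hasDerivWithinAt) t ⟨ht, le_rfl⟩
  simp only [mul_zero, sub_zero] at h
  linarith

end IsLogitSolution

/-- Comparison/shift property of the cross-entropy logit ODE: the trajectory with
larger initial value stays larger, and the difference in the times to reach a common
target is the explicit constant `(1/(2a))(log(u₂(0)/u₁(0)) + Ei(u₂(0)) − Ei(u₁(0)))`. -/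
theorem stmt_19 (a : ℝ) (ha : 0 < a) (u₁ u₂ : ℝ → ℝ)
    (h1 : ∀ t ≥ (0:ℝ), HasDerivAt u₁ (2 * a * u₁ t / (1 + Real.exp (u₁ t))) t)
    (h2 : ∀ t ≥ (0:ℝ), HasDerivAt u₂ (2 * a * u₂ t / (1 + Real.exp (u₂ t))) t)
    (hpos : 0 < u₁ 0) (hle : u₁ 0 ≤ u₂ 0) :
    (∀ t ≥ (0:ℝ), u₁ t ≤ u₂ t) ∧
      ∀ uf ≥ u₂ 0, ∀ t₁ ≥ (0:ℝ), ∀ t₂ ≥ (0:ℝ), u₁ t₁ = uf → u₂ t₂ = uf →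
        t₁ - t₂ = 1 / (2 * a) *
          (Real.log (u₂ 0 / u₁ 0) + expInt (u₂ 0) - expInt (u₁ 0)) := by
  have hpos₂ : 0 < u₂ 0 := hpos.trans_le hle
  have hG₁ {t : ℝ} (ht : 0 ≤ t) := IsLogitSolution.logAddExpInt_apply h1 ha hpos ht
  have hG₂ {t : ℝ} (ht : 0 ≤ t) := IsLogitSolution.logAddExpInt_apply h2 ha hpos₂ ht
  refine ⟨fun t ht => ?_, fun uf _ t₁ ht₁ t₂ ht₂ hu₁ hu₂ => ?_⟩
  · have hmem₁ : u₁ t ∈ Ioi 0 := hpos.trans_le (IsLogitSolution.apply_zero_le h1 ha hpos ht)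
    have hmem₂ : u₂ t ∈ Ioi 0 := hpos₂.trans_le (IsLogitSolution.apply_zero_le h2 ha hpos₂ ht)
    rw [← strictMonoOn_logAddExpInt.le_iff_le hmem₁ hmem₂, hG₁ ht, hG₂ ht, add_le_add_iff_right,
      strictMonoOn_logAddExpInt.le_iff_le hpos hpos₂]
    exact hle
  · have e₁ := hG₁ ht₁
    have e₂ := hG₂ ht₂
    rw [hu₁] at e₁
    rw [hu₂] at e₂
    simp only [logAddExpInt] at e₁ e₂
    rw [log_div hpos₂.ne' hpos.ne']
    field_simp
    linarith
end
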